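/- For the example target distribution q_{X₁X₂Y} (with X₁=(X₁₁,X₁₂) a pair of independent uniform bits, X₂=B uniform on {1,2} independent of X₁, and Y=X_{1B}), cribbing strictly improves the feasible channel-resource entropies: (i) there exists a pmf with the cribbing factorization p(x₁)p(x₂)p(u₂,x̃₂|x₂)p(u₁,x̃₁|x₁,x̃₂)p(y|u₁,u₂,x̃₁,x̃₂) on finite alphabets whose (X₁,X₂,Y)-marginal equals q(x₁,x₂,y) and which satisfies H(X̃₁) = 1 (in bits); whereas (ii) every pmf with the non-cribbing factorization p(x₁)p(x₂)p(u₁,x̃₁|x₁)p(u₂,x̃₂|x₂)p(y|u₁,u₂,x̃₁,x̃₂) on finite alphabets whose (X₁,X₂,Y)-marginal equals q(x₁,x₂,y) satisfies H(U₁,X̃₁) ≥ I(U₁,X̃₁;X₁) ≥ 2 (in bits). -/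

import Mathlib

/-!
With cribbing, encoder 2 announces `B` as `X̃₂`, so encoder 1 only has to send the selected bit
`X_{1B}`, a uniform bit, and the channel forwards it.

Without cribbing, let `x₁` and `x₁'` both produce the same `v = (u₁, x̃₁)` with positive
probability. Since `X₂` is independent of `(X₁, U₁, X̃₁)`, for each `b` some `(u₂, x̃₂)` and some
output `y` occur with positive probability together with `v` and either of `x₁`, `x₁'`; as
`Y = X_{1B}` almost surely, `x₁` and `x₁'` agree at `b`. So `(U₁, X̃₁)` determines `X₁`, and
`I(U₁, X̃₁; X₁) = H(X₁) = 2 ≤ H(U₁, X̃₁)`.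
-/


open scoped BigOperators

noncomputable section

/-- `p` is a probability mass function on the finite type `α`. -/
def IsPMF {α : Type*} [Fintype α] (p : α → ℝ) : Prop :=
  (∀ a, 0 ≤ p a) ∧ ∑ a, p a = 1

/-- `k` is a stochastic kernel from `α` to the finite type `β`. -/
def IsKernel {α β : Type*} [Fintype β] (k : α → β → ℝ) : Prop :=
  ∀ a, (∀ b, 0 ≤ k a b) ∧ ∑ b, k a b = 1

/-- Distribution (pushforward pmf) of the random variable `X` under the pmf `μ`. -/
def rvDist {Ω α : Type*} [Fintype Ω] [DecidableEq α] (μ : Ω → ℝ) (X : Ω → α) : α → ℝ :=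
  fun a => ∑ ω, if X ω = a then μ ω else 0

/-- Shannon entropy in bits of a pmf on a finite type. -/
def entBits {α : Type*} [Fintype α] (p : α → ℝ) : ℝ :=
  (∑ a, Real.negMulLog (p a)) / Real.log 2

/-- Entropy (in bits) of a random variable `X` under the pmf `μ`. -/
def Hb {Ω α : Type*} [Fintype Ω] [Fintype α] [DecidableEq α] (μ : Ω → ℝ) (X : Ω → α) : ℝ :=
  entBits (rvDist μ X)

/-- Conditional entropy (in bits) `H(X | Z)`. -/
def condHb {Ω α γ : Type*} [Fintype Ω] [Fintype α] [Fintype γ] [DecidableEq α] [DecidableEq γ]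
    (μ : Ω → ℝ) (X : Ω → α) (Z : Ω → γ) : ℝ :=
  Hb μ (fun ω => (X ω, Z ω)) - Hb μ Z

/-- Mutual information (in bits) `I(X; Y)`. -/
def Ib {Ω α β : Type*} [Fintype Ω] [Fintype α] [Fintype β] [DecidableEq α] [DecidableEq β]
    (μ : Ω → ℝ) (X : Ω → α) (Y : Ω → β) : ℝ :=
  Hb μ X + Hb μ Y - Hb μ (fun ω => (X ω, Y ω))

/-- Conditional mutual information (in bits) `I(X; Y | Z)`. -/
def condIb {Ω α β γ : Type*} [Fintype Ω] [Fintype α] [Fintype β] [Fintype γ]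
    [DecidableEq α] [DecidableEq β] [DecidableEq γ]
    (μ : Ω → ℝ) (X : Ω → α) (Y : Ω → β) (Z : Ω → γ) : ℝ :=
  Hb μ (fun ω => (X ω, Z ω)) + Hb μ (fun ω => (Y ω, Z ω))
    - Hb μ (fun ω => (X ω, Y ω, Z ω)) - Hb μ Z

/- The example target distribution: `X₁ = (X₁₁, X₁₂)` a pair of independent uniform bits,
`X₂ = B` uniform on `{1, 2}` (encoded as `Bool`, `false ↦ 1`, `true ↦ 2`) independent of
`X₁`, and `Y = X_{1B}` the `B`-th component of `X₁`. -/

/-- Selection of the `B`-th component of `x₁ = (x₁₁, x₁₂)`. -/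
def selB (b : Bool) (a : Bool × Bool) : Bool := if b then a.2 else a.1

/-- The example target pmf `q_{X₁X₂Y}` on `(Bool × Bool) × Bool × Bool`. -/
def qEx : (Bool × Bool) × Bool × Bool → ℝ :=
  fun z => if z.2.2 = selB z.2.1 z.1 then (8 : ℝ)⁻¹ else 0

/- Projections of a 7-tuple sample space `Ω = 𝒳₁ × 𝒳₂ × 𝒰₁ × 𝒰₂ × 𝒳̃₁ × 𝒳̃₂ × 𝒴`. -/
section Proj7
variable {A B C D E F G : Type*}
def pj1 (ω : A × B × C × D × E × F × G) : A := ω.1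
def pj2 (ω : A × B × C × D × E × F × G) : B := ω.2.1
def pj3 (ω : A × B × C × D × E × F × G) : C := ω.2.2.1
def pj4 (ω : A × B × C × D × E × F × G) : D := ω.2.2.2.1
def pj5 (ω : A × B × C × D × E × F × G) : E := ω.2.2.2.2.1
def pj6 (ω : A × B × C × D × E × F × G) : F := ω.2.2.2.2.2.1
def pj7 (ω : A × B × C × D × E × F × G) : G := ω.2.2.2.2.2.2
end Proj7

open Finset Real

section Entropy

variable {Ω α β : Type*} [Fintype Ω] [DecidableEq α] [DecidableEq β] {μ : Ω → ℝ}

lemma rvDist_nonneg (hμ : ∀ ω, 0 ≤ μ ω) (X : Ω → α) (a : α) : 0 ≤ rvDist μ X a :=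
  sum_nonneg fun ω _ => by split_ifs <;> simp [hμ ω]

lemma rvDist_eq_sum_pair_left [Fintype β] (X : Ω → α) (Z : Ω → β) (a : α) :
    rvDist μ X a = ∑ b, rvDist μ (fun ω => (X ω, Z ω)) (a, b) := by
  unfold rvDist
  rw [sum_comm]
  refine sum_congr rfl fun ω _ => ?_
  by_cases h : X ω = a <;> simp [Prod.ext_iff, h]

lemma rvDist_eq_sum_pair_right [Fintype α] (X : Ω → α) (Z : Ω → β) (b : β) :
    rvDist μ Z b = ∑ a, rvDist μ (fun ω => (X ω, Z ω)) (a, b) := by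
  unfold rvDist
  rw [sum_comm]
  refine sum_congr rfl fun ω _ => ?_
  by_cases h : Z ω = b <;> simp [Prod.ext_iff, h]

lemma exists_ne_zero_of_rvDist_ne_zero {X : Ω → α} {a : α} (h : rvDist μ X a ≠ 0) :
    ∃ ω, X ω = a ∧ μ ω ≠ 0 := by
  obtain ⟨ω, -, hω⟩ := exists_ne_zero_of_sum_ne_zero h
  by_cases hX : X ω = a
  · exact ⟨ω, hX, by simpa [hX] using hω⟩
  · simp [hX] at hω

lemma rvDist_apply_ne_zero (hμ : ∀ ω, 0 ≤ μ ω) {ω : Ω} (hω : μ ω ≠ 0) (X : Ω → α) :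
    rvDist μ X (X ω) ≠ 0 := by
  refine (lt_of_lt_of_le ((hμ ω).lt_of_ne' hω) ?_).ne'
  have := single_le_sum (f := fun ω' => if X ω' = X ω then μ ω' else 0)
    (fun ω' _ => by split_ifs <;> simp [hμ ω']) (mem_univ ω)
  simpa [rvDist] using this

lemma negMulLog_sum_le {ι : Type*} [Fintype ι] (r : ι → ℝ) (hr : ∀ i, 0 ≤ r i) :
    negMulLog (∑ i, r i) ≤ ∑ i, negMulLog (r i) := by
  rw [negMulLog, neg_mul, sum_mul, ← sum_neg_distrib]
  refine sum_le_sum fun i _ => ?_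
  rcases (hr i).eq_or_lt with h | h
  · simp [← h]
  · rw [negMulLog, neg_mul, neg_le_neg_iff]
    exact mul_le_mul_of_nonneg_left (log_le_log h (single_le_sum (fun j _ => hr j)
      (mem_univ i))) h.le

lemma negMulLog_sum_eq {ι : Type*} [Fintype ι] {r : ι → ℝ}
    (hr : ∀ i j, r i ≠ 0 → r j ≠ 0 → i = j) :
    negMulLog (∑ i, r i) = ∑ i, negMulLog (r i) := by
  by_cases h : ∃ i, r i ≠ 0
  · obtain ⟨i, hi⟩ := h
    have hz : ∀ j, j ≠ i → r j = 0 := fun j hj => by_contra fun hj' => hj (hr j i hj' hi)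
    rw [sum_eq_single i (fun j _ hj => hz j hj) (by simp),
      sum_eq_single i (fun j _ hj => by rw [hz j hj, negMulLog_zero]) (by simp)]
  · push Not at h
    simp [h]

variable [Fintype α] [Fintype β]

lemma Hb_le_Hb_pair (hμ : ∀ ω, 0 ≤ μ ω) (X : Ω → α) (Z : Ω → β) :
    Hb μ Z ≤ Hb μ (fun ω => (X ω, Z ω)) := by
  rw [Hb, Hb, entBits, entBits, Fintype.sum_prod_type_right]
  gcongr with b
  rw [rvDist_eq_sum_pair_right X Z b]
  exact negMulLog_sum_le _ fun a => rvDist_nonneg hμ _ _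

lemma Hb_pair_eq_of_determines {V : Ω → α} {X : Ω → β}
    (hdet : ∀ ω ω', μ ω ≠ 0 → μ ω' ≠ 0 → V ω = V ω' → X ω = X ω') :
    Hb μ (fun ω => (V ω, X ω)) = Hb μ V := by
  rw [Hb, Hb, entBits, entBits, Fintype.sum_prod_type]
  congr 1
  refine sum_congr rfl fun v _ => ?_
  rw [rvDist_eq_sum_pair_left V X v, negMulLog_sum_eq fun x x' hx hx' => ?_]
  obtain ⟨ω, hωv, hω⟩ := exists_ne_zero_of_rvDist_ne_zero hx
  obtain ⟨ω', hωv', hω'⟩ := exists_ne_zero_of_rvDist_ne_zero hx'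
  simp only [Prod.mk.injEq] at hωv hωv'
  rw [← hωv.2, ← hωv'.2]
  exact hdet ω ω' hω hω' (hωv.1.trans hωv'.1.symm)

lemma Ib_le_Hb_left (hμ : ∀ ω, 0 ≤ μ ω) (V : Ω → α) (X : Ω → β) : Ib μ V X ≤ Hb μ V := by
  have := Hb_le_Hb_pair hμ V X
  rw [Ib]
  linarith

lemma Ib_eq_Hb_right_of_determines {V : Ω → α} {X : Ω → β}
    (hdet : ∀ ω ω', μ ω ≠ 0 → μ ω' ≠ 0 → V ω = V ω' → X ω = X ω') :
    Ib μ V X = Hb μ X := by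
  rw [Ib, Hb_pair_eq_of_determines hdet]
  ring

end Entropy

def uniformPMF (α : Type*) [Fintype α] : α → ℝ := fun _ => (Fintype.card α : ℝ)⁻¹

lemma isPMF_uniformPMF (α : Type*) [Fintype α] [Nonempty α] : IsPMF (uniformPMF α) :=
  ⟨fun _ => by simp [uniformPMF], by simp [uniformPMF]⟩

lemma entBits_uniformPMF (α : Type*) [Fintype α] :
    entBits (uniformPMF α) = logb 2 (Fintype.card α) := by
  rcases (Nat.cast_nonneg (α := ℝ) (Fintype.card α)).eq_or_lt with h | h
  · simp [entBits, uniformPMF, ← h]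
  · simp only [entBits, uniformPMF, sum_const, card_univ, nsmul_eq_mul, negMulLog, log_inv,
      logb]
    field_simp

def detKernel {α β : Type*} [DecidableEq β] (f : α → β) : α → β → ℝ :=
  fun a b => if b = f a then 1 else 0

lemma isKernel_detKernel {α β : Type*} [Fintype β] [DecidableEq β] (f : α → β) :
    IsKernel (detKernel f) :=
  fun a => ⟨fun b => by unfold detKernel; split_ifs <;> norm_num, by simp [detKernel]⟩

def cribK2 : Bool → Fin 1 × Fin 2 → ℝ := detKernel fun b => (0, finTwoEquiv.symm b)

def cribK1 : (Bool × Bool) × Fin 2 → Fin 1 × Fin 2 → ℝ :=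
  detKernel fun q => (0, finTwoEquiv.symm (selB (finTwoEquiv q.2) q.1))

def cribKY : Fin 1 × Fin 1 × Fin 2 × Fin 2 → Bool → ℝ := detKernel fun g => finTwoEquiv g.2.2.1

def cribPMF : (Bool × Bool) × Bool × Fin 1 × Fin 1 × Fin 2 × Fin 2 × Bool → ℝ :=
  fun ⟨x1, x2, u1, u2, xt1, xt2, y⟩ =>
    uniformPMF _ x1 * uniformPMF _ x2 * cribK2 x2 (u2, xt2) * cribK1 (x1, xt2) (u1, xt1) *
      cribKY (u1, u2, xt1, xt2) y

lemma rvDist_cribPMF_target (z : (Bool × Bool) × Bool × Bool) :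
    rvDist cribPMF (fun ω => (pj1 ω, pj2 ω, pj7 ω)) z = qEx z := by
  obtain ⟨⟨a, b⟩, c, d⟩ := z
  cases a <;> cases b <;> cases c <;> cases d <;>
    simp [rvDist, cribPMF, uniformPMF, cribK2, cribK1, cribKY, detKernel, finTwoEquiv, selB,
      qEx, Fintype.sum_prod_type, Fin.sum_univ_two, pj1, pj2, pj7] <;> norm_num

lemma rvDist_cribPMF_pj5 : rvDist cribPMF pj5 = uniformPMF (Fin 2) := by
  funext a
  fin_cases a <;>
    simp [rvDist, cribPMF, uniformPMF, cribK2, cribK1, cribKY, detKernel, finTwoEquiv, selB,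
      Fintype.sum_prod_type, Fin.sum_univ_two, pj5] <;> norm_num

lemma Hb_cribPMF_pj5 : Hb cribPMF pj5 = 1 := by
  rw [Hb, rvDist_cribPMF_pj5, entBits_uniformPMF]
  simp

lemma eq_of_forall_selB_eq {a a' : Bool × Bool} (h : ∀ b, selB b a = selB b a') : a = a' :=
  Prod.ext (h false) (h true)

section Target

variable {C D E F : Type*} [Fintype C] [Fintype D] [Fintype E] [Fintype F]
  {μ : (Bool × Bool) × Bool × C × D × E × F × Bool → ℝ}

lemma rvDist_pj1_of_target (hq : ∀ z, rvDist μ (fun ω => (pj1 ω, pj2 ω, pj7 ω)) z = qEx z) :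
    rvDist μ pj1 = uniformPMF (Bool × Bool) := by
  funext x1
  rw [rvDist_eq_sum_pair_left pj1 (fun ω => (pj2 ω, pj7 ω)),
    Fintype.sum_congr _ _ fun b => hq (x1, b)]
  obtain ⟨a, b⟩ := x1
  cases a <;> cases b <;> simp [qEx, selB, uniformPMF, Fintype.sum_prod_type] <;> norm_num

lemma Hb_pj1_of_target (hq : ∀ z, rvDist μ (fun ω => (pj1 ω, pj2 ω, pj7 ω)) z = qEx z) :
    Hb μ pj1 = 2 := by
  rw [Hb, rvDist_pj1_of_target hq, entBits_uniformPMF, Fintype.card_prod, Fintype.card_bool,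
    Nat.cast_mul, ← sq, logb_pow, Nat.cast_ofNat, logb_self_eq_one one_lt_two, mul_one]

lemma pj7_eq_selB_of_target (hμ : ∀ ω, 0 ≤ μ ω)
    (hq : ∀ z, rvDist μ (fun ω => (pj1 ω, pj2 ω, pj7 ω)) z = qEx z) {ω} (hω : μ ω ≠ 0) :
    pj7 ω = selB (pj2 ω) (pj1 ω) := by
  have := rvDist_apply_ne_zero hμ hω (fun ω => (pj1 ω, pj2 ω, pj7 ω))
  rw [hq] at this
  by_contra h
  simp [qEx, h] at this

lemma exists_pj2_of_target (hq : ∀ z, rvDist μ (fun ω => (pj1 ω, pj2 ω, pj7 ω)) z = qEx z)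
    (x2 : Bool) : ∃ ω, pj2 ω = x2 ∧ μ ω ≠ 0 := by
  obtain ⟨ω, hω, hμω⟩ := exists_ne_zero_of_rvDist_ne_zero
    (μ := μ) (X := fun ω => (pj1 ω, pj2 ω, pj7 ω))
    (a := ((false, false), x2, selB x2 (false, false)))
    (by simp [hq, qEx])
  exact ⟨ω, congrArg (fun z => z.2.1) hω, hμω⟩

end Target

def IsNonCribbingFactorization {X1 X2 Y U1 U2 Xt1 Xt2 : Type*}
    (μ : X1 × X2 × U1 × U2 × Xt1 × Xt2 × Y → ℝ) (pX1 : X1 → ℝ) (pX2 : X2 → ℝ)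
    (k1 : X1 → U1 × Xt1 → ℝ) (k2 : X2 → U2 × Xt2 → ℝ) (kY : U1 × U2 × Xt1 × Xt2 → Y → ℝ) :
    Prop :=
  ∀ x1 x2 u1 u2 xt1 xt2 y, μ (x1, x2, u1, u2, xt1, xt2, y) =
    pX1 x1 * pX2 x2 * k1 x1 (u1, xt1) * k2 x2 (u2, xt2) * kY (u1, u2, xt1, xt2) y

section NonCribbing

variable {X1 X2 Y U1 U2 Xt1 Xt2 : Type*}
  {μ : X1 × X2 × U1 × U2 × Xt1 × Xt2 × Y → ℝ} {pX1 : X1 → ℝ} {pX2 : X2 → ℝ}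
  {k1 : X1 → U1 × Xt1 → ℝ} {k2 : X2 → U2 × Xt2 → ℝ} {kY : U1 × U2 × Xt1 × Xt2 → Y → ℝ}

lemma IsNonCribbingFactorization.nonneg [Fintype X1] [Fintype X2] [Fintype U1] [Fintype U2]
    [Fintype Xt1] [Fintype Xt2] [Fintype Y] (hfact : IsNonCribbingFactorization μ pX1 pX2 k1 k2 kY)
    (hp1 : IsPMF pX1) (hp2 : IsPMF pX2) (hk1 : IsKernel k1) (hk2 : IsKernel k2)
    (hkY : IsKernel kY) (ω : X1 × X2 × U1 × U2 × Xt1 × Xt2 × Y) : 0 ≤ μ ω := by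
  obtain ⟨x1, x2, u1, u2, xt1, xt2, y⟩ := ω
  rw [hfact]
  exact mul_nonneg (mul_nonneg (mul_nonneg (mul_nonneg (hp1.1 x1) (hp2.1 x2)) ((hk1 x1).1 _))
    ((hk2 x2).1 _)) ((hkY _).1 y)

lemma IsNonCribbingFactorization.ne_zero (hfact : IsNonCribbingFactorization μ pX1 pX2 k1 k2 kY)
    {ω : X1 × X2 × U1 × U2 × Xt1 × Xt2 × Y} (hω : μ ω ≠ 0) :
    pX1 (pj1 ω) * k1 (pj1 ω) (pj3 ω, pj5 ω) ≠ 0 ∧ pX2 (pj2 ω) ≠ 0 := by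
  obtain ⟨x1, x2, u1, u2, xt1, xt2, y⟩ := ω
  rw [hfact] at hω
  simp only [mul_ne_zero_iff] at hω
  exact ⟨mul_ne_zero hω.1.1.1.1 hω.1.1.2, hω.1.1.1.2⟩

lemma IsNonCribbingFactorization.apply_eq [Fintype U2] [Fintype Xt2] [Fintype Y]
    (hfact : IsNonCribbingFactorization μ pX1 pX2 k1 k2 kY) (hk2 : IsKernel k2)
    (hkY : IsKernel kY) (φ : X2 → X1 → Y) (hsupp : ∀ ω, μ ω ≠ 0 → pj7 ω = φ (pj2 ω) (pj1 ω))
    {x1 x1' : X1} {v : U1 × Xt1} (h : pX1 x1 * k1 x1 v ≠ 0) (h' : pX1 x1' * k1 x1' v ≠ 0)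
    {x2 : X2} (hx2 : pX2 x2 ≠ 0) : φ x2 x1 = φ x2 x1' := by
  obtain ⟨w, -, hw⟩ := exists_ne_zero_of_sum_ne_zero ((hk2 x2).2.symm ▸ one_ne_zero)
  obtain ⟨y, -, hy⟩ := exists_ne_zero_of_sum_ne_zero
    ((hkY (v.1, w.1, v.2, w.2)).2.symm ▸ one_ne_zero)
  have hpos : ∀ x, pX1 x * k1 x v ≠ 0 → μ (x, x2, v.1, w.1, v.2, w.2, y) ≠ 0 := fun x hx => by
    rw [hfact]
    simp only [mul_ne_zero_iff] at hx ⊢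
    exact ⟨⟨⟨⟨hx.1, hx2⟩, hx.2⟩, hw⟩, hy⟩
  exact (hsupp _ (hpos x1 h)).symm.trans (hsupp _ (hpos x1' h'))

end NonCribbing

theorem IsNonCribbingFactorization.Ib_eq_two {U1 U2 Xt1 Xt2 : Type*} [Fintype U1] [Fintype U2]
    [Fintype Xt1] [Fintype Xt2] [DecidableEq U1] [DecidableEq Xt1]
    {μ : (Bool × Bool) × Bool × U1 × U2 × Xt1 × Xt2 × Bool → ℝ} {pX1 : Bool × Bool → ℝ}
    {pX2 : Bool → ℝ} {k1 : Bool × Bool → U1 × Xt1 → ℝ} {k2 : Bool → U2 × Xt2 → ℝ}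
    {kY : U1 × U2 × Xt1 × Xt2 → Bool → ℝ}
    (hfact : IsNonCribbingFactorization μ pX1 pX2 k1 k2 kY) (hk2 : IsKernel k2)
    (hkY : IsKernel kY) (hμ : ∀ ω, 0 ≤ μ ω)
    (hq : ∀ z, rvDist μ (fun ω => (pj1 ω, pj2 ω, pj7 ω)) z = qEx z) :
    Ib μ (fun ω => (pj3 ω, pj5 ω)) pj1 = 2 := by
  have hX2 : ∀ x2, pX2 x2 ≠ 0 := fun x2 => by
    obtain ⟨ω, rfl, hω⟩ := exists_pj2_of_target hq x2
    exact (hfact.ne_zero hω).2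
  rw [Ib_eq_Hb_right_of_determines fun ω ω' hω hω' hv => ?_, Hb_pj1_of_target hq]
  have h := (hfact.ne_zero hω).1
  have h' := (hfact.ne_zero hω').1
  rw [hv] at h
  exact eq_of_forall_selB_eq fun x2 =>
    hfact.apply_eq hk2 hkY selB (fun _ => pj7_eq_selB_of_target hμ hq) h h' (hX2 x2)

/-- **Cribbing strictly helps for the example.**
(i) With cribbing, there is a pmf of the cribbing form
`p(x₁)p(x₂) p(u₂,x̃₂|x₂) p(u₁,x̃₁|x₁,x̃₂) p(y|u₁,u₂,x̃₁,x̃₂)` realizing the example target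
with `H(X̃₁) = 1` bit; whereas (ii) every pmf of the non-cribbing form
`p(x₁)p(x₂) p(u₁,x̃₁|x₁) p(u₂,x̃₂|x₂) p(y|u₁,u₂,x̃₁,x̃₂)` realizing the example target
has `H(U₁, X̃₁) ≥ I(U₁, X̃₁; X₁) ≥ 2` bits. -/
theorem example_cribbing_strictly_helps :
    -- (i) achievability with cribbing
    (∃ (nU1 nU2 nXt1 nXt2 : ℕ)
      (μ : (Bool × Bool) × Bool × Fin nU1 × Fin nU2 × Fin nXt1 × Fin nXt2 × Bool → ℝ)
      (pX1 : Bool × Bool → ℝ) (pX2 : Bool → ℝ)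
      (k2 : Bool → Fin nU2 × Fin nXt2 → ℝ)
      (k1 : (Bool × Bool) × Fin nXt2 → Fin nU1 × Fin nXt1 → ℝ)
      (kY : Fin nU1 × Fin nU2 × Fin nXt1 × Fin nXt2 → Bool → ℝ),
      IsPMF pX1 ∧ IsPMF pX2 ∧ IsKernel k2 ∧ IsKernel k1 ∧ IsKernel kY ∧
      (∀ x1 x2 u1 u2 xt1 xt2 y,
        μ (x1, x2, u1, u2, xt1, xt2, y) =
          pX1 x1 * pX2 x2 * k2 x2 (u2, xt2) * k1 (x1, xt2) (u1, xt1) *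
            kY (u1, u2, xt1, xt2) y) ∧
      (∀ z, rvDist μ (fun ω => (pj1 ω, pj2 ω, pj7 ω)) z = qEx z) ∧
      Hb μ pj5 = 1) ∧
    -- (ii) converse without cribbing
    (∀ (U1 U2 Xt1 Xt2 : Type)
      (_ : Fintype U1) (_ : Fintype U2) (_ : Fintype Xt1) (_ : Fintype Xt2)
      (_ : DecidableEq U1) (_ : DecidableEq U2) (_ : DecidableEq Xt1) (_ : DecidableEq Xt2)
      (μ : (Bool × Bool) × Bool × U1 × U2 × Xt1 × Xt2 × Bool → ℝ)
      (pX1 : Bool × Bool → ℝ) (pX2 : Bool → ℝ)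
      (k1 : Bool × Bool → U1 × Xt1 → ℝ) (k2 : Bool → U2 × Xt2 → ℝ)
      (kY : U1 × U2 × Xt1 × Xt2 → Bool → ℝ),
      IsPMF pX1 → IsPMF pX2 → IsKernel k1 → IsKernel k2 → IsKernel kY →
      (∀ x1 x2 u1 u2 xt1 xt2 y,
        μ (x1, x2, u1, u2, xt1, xt2, y) =
          pX1 x1 * pX2 x2 * k1 x1 (u1, xt1) * k2 x2 (u2, xt2) * kY (u1, u2, xt1, xt2) y) →
      (∀ z, rvDist μ (fun ω => (pj1 ω, pj2 ω, pj7 ω)) z = qEx z) →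
      Hb μ (fun ω => (pj3 ω, pj5 ω)) ≥ Ib μ (fun ω => (pj3 ω, pj5 ω)) pj1 ∧
        Ib μ (fun ω => (pj3 ω, pj5 ω)) pj1 ≥ 2) := by
  refine ⟨⟨1, 1, 2, 2, cribPMF, uniformPMF _, uniformPMF _, cribK2, cribK1, cribKY,
    isPMF_uniformPMF _, isPMF_uniformPMF _, isKernel_detKernel _, isKernel_detKernel _,
    isKernel_detKernel _, fun _ _ _ _ _ _ _ => rfl, rvDist_cribPMF_target, Hb_cribPMF_pj5⟩, ?_⟩
  intro U1 U2 Xt1 Xt2 _ _ _ _ _ _ _ _ μ pX1 pX2 k1 k2 kY hp1 hp2 hk1 hk2 hkY hfact hq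
  have hμ := IsNonCribbingFactorization.nonneg hfact hp1 hp2 hk1 hk2 hkY
  exact ⟨Ib_le_Hb_left hμ _ _, (IsNonCribbingFactorization.Ib_eq_two hfact hk2 hkY hμ hq).ge⟩
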